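/- arXiv:2009.12033 — 3 statements merged into one kernel-verified Lean document; each statement's English description precedes it below -/
import Mathlib

section
/- Let τ(U;θ,g,f) be an estimating function that satisfies E[τ(U;θ*,g*,f)] = 0 for all f in a neighborhood f + L₂(δ) ⊂ F. If differentiation under the expectation is valid, then for any such f, the conditional expectation E[∂τ/∂f (U;θ*,g*,f) | X] = 0 almost surely. -/
open MeasureTheory

/-- If E[τ(U;θ*,g*,f+a·h)] = 0 for all perturbations a·h with
‖h(X)‖_{L2} ≤ 1 and |a| ≤ δ, and differentiation under the expectation is valid
(i.e. a ↦ E[τ(U;θ*,g*,f+a·h)] has derivative E[W·h(X)] at a = 0, where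
W = ∂τ/∂f(U;θ*,g*,f)), then E[W | X] = 0 almost surely. -/
theorem stmt0
    {Ω : Type*} [MeasurableSpace Ω] {μ : Measure Ω} [IsProbabilityMeasure μ]
    {d : ℕ} (X : Ω → (Fin d → ℝ)) (hX : Measurable X)
    (δ : ℝ) (hδ : 0 < δ)
    -- `T a h` denotes E[ τ(U; θ*, g*, f + a·h) ]
    (T : ℝ → ((Fin d → ℝ) → ℝ) → ℝ)
    -- `W` denotes ∂τ/∂f (U; θ*, g*, f)
    (W : Ω → ℝ) (hW : MemLp W 2 μ)
    (hzero : ∀ h : (Fin d → ℝ) → ℝ, Measurable h →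
      (∫ ω, (h (X ω)) ^ 2 ∂μ) ≤ 1 → ∀ a : ℝ, |a| ≤ δ → T a h = 0)
    (hdiff : ∀ h : (Fin d → ℝ) → ℝ, Measurable h →
      (∫ ω, (h (X ω)) ^ 2 ∂μ) ≤ 1 →
      HasDerivAt (fun a => T a h) (∫ ω, W ω * h (X ω) ∂μ) 0) :
    μ[W | MeasurableSpace.comap X inferInstance] =ᵐ[μ] 0 := by
  have hm : MeasurableSpace.comap X inferInstance ≤ ‹MeasurableSpace Ω› := hX.comap_le
  haveI : SigmaFinite (μ.trim hm) := by
    have : IsFiniteMeasure (μ.trim hm) := isFiniteMeasure_trim hm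
    infer_instance
  have hWint : Integrable W μ := hW.integrable one_le_two
  -- key: for every set s in the comap σ-algebra, ∫_s W = 0
  have key : ∀ s : Set Ω, MeasurableSet[MeasurableSpace.comap X inferInstance] s →
      ∫ ω in s, W ω ∂μ = 0 := by
    rintro s ⟨B, hB, rfl⟩
    set h : (Fin d → ℝ) → ℝ := B.indicator (fun _ => 1) with hh
    have hhm : Measurable h := measurable_one.indicator hB
    have hcomp : ∀ ω, h (X ω) = (X ⁻¹' B).indicator (fun _ => (1:ℝ)) ω := by
      intro ω
      by_cases hω : X ω ∈ B <;>
        simp [hh, Set.indicator, hω, Set.mem_preimage]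
    have hsq : (∫ ω, (h (X ω)) ^ 2 ∂μ) ≤ 1 := by
      have : ∀ ω, (h (X ω)) ^ 2 = (X ⁻¹' B).indicator (fun _ => (1:ℝ)) ω := by
        intro ω
        by_cases hω : X ω ∈ B <;>
          simp [hh, Set.indicator, hω, Set.mem_preimage]
      rw [integral_congr_ae (Filter.Eventually.of_forall this),
        integral_indicator (hX hB)]
      simp only [integral_const, smul_eq_mul, mul_one]
      calc (μ.restrict (X ⁻¹' B) Set.univ).toReal = (μ (X ⁻¹' B)).toReal := by
            rw [Measure.restrict_apply_univ]
        _ ≤ (μ Set.univ).toReal := by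
            exact ENNReal.toReal_mono (measure_ne_top _ _)
              (measure_mono (Set.subset_univ _))
        _ = 1 := by simp
    -- the map a ↦ T a h is 0 near 0, so its derivative at 0 is 0
    have hconst : (fun a => T a h) =ᶠ[nhds 0] (fun _ => (0:ℝ)) := by
      have : Set.Ioo (-δ) δ ∈ nhds (0:ℝ) := Ioo_mem_nhds (by linarith) hδ
      filter_upwards [this] with a ha
      exact hzero h hhm hsq a (by rw [abs_le]; exact ⟨le_of_lt ha.1, le_of_lt ha.2⟩)
    have hderiv0 : HasDerivAt (fun a => T a h) 0 0 :=
      (hasDerivAt_const (0:ℝ) (0:ℝ)).congr_of_eventuallyEq hconst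
    have huniq : (∫ ω, W ω * h (X ω) ∂μ) = 0 :=
      (hdiff h hhm hsq).unique hderiv0
    have : (∫ ω, W ω * h (X ω) ∂μ) = ∫ ω in X ⁻¹' B, W ω ∂μ := by
      rw [← integral_indicator (hX hB)]
      refine integral_congr_ae (Filter.Eventually.of_forall fun ω => ?_)
      by_cases hω : X ω ∈ B <;>
        simp [hh, Set.indicator, hω, Set.mem_preimage]
    rw [← this, huniq]
  have h0 : (fun _ : Ω => (0:ℝ)) =ᵐ[μ] μ[W | MeasurableSpace.comap X inferInstance] := by
    refine ae_eq_condExp_of_forall_setIntegral_eq hm hWint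
      (fun s _ _ => (integrable_zero _ _ _).integrableOn)
      (fun s hs _ => by rw [key s hs]; simp)
      (StronglyMeasurable.aestronglyMeasurable stronglyMeasurable_const)
  exact h0.symm
end

section
/- Empirical compatibility from theoretical compatibility: let Σ and Σ̃ be symmetric p×p matrices with |bᵀ(Σ̃−Σ)b| ≤ Bλ‖b‖₁² for all b ∈ ℝᵖ, where B, λ > 0. Suppose Σ satisfies the compatibility condition with subset S ⊆ {1,…,p}, constants ν > 0 and μ > 1: ν²(Σ_{j∈S}|b_j|)² ≤ |S|(bᵀΣb) for all b with Σ_{j∉S}|b_j| ≤ μΣ_{j∈S}|b_j|. If ρ := ν⁻²(1+μ)²|S|λB < 1, then Σ̃ satisfies the compatibility condition with the same S, μ and constant ν₁ = ν√(1−ρ): ν₁²(Σ_{j∈S}|b_j|)² ≤ |S|(bᵀΣ̃b) for all b with Σ_{j∉S}|b_j| ≤ μΣ_{j∈S}|b_j|. -/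
open Matrix Finset

/-- Empirical compatibility from theoretical compatibility: if
|bᵀ(Σ̃−Σ)b| ≤ Bλ‖b‖₁² for all b, Σ satisfies the compatibility condition with
subset S and constants ν > 0, μ > 1, and ρ := ν⁻²(1+μ)²|S|λB < 1, then Σ̃
satisfies the compatibility condition with the same S, μ and constant
ν₁ = ν√(1−ρ). -/
theorem stmt7 {p : ℕ} (A A' : Matrix (Fin p) (Fin p) ℝ)
    (hA : A.IsSymm) (hA' : A'.IsSymm)
    (B lam : ℝ) (hB : 0 < B) (hlam : 0 < lam)
    (hclose : ∀ b : Fin p → ℝ,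
      |b ⬝ᵥ (A' - A).mulVec b| ≤ B * lam * (∑ j, |b j|) ^ 2)
    (S : Finset (Fin p)) (ν μ : ℝ) (hν : 0 < ν) (hμ : 1 < μ)
    (hcompat : ∀ b : Fin p → ℝ,
      (∑ j ∈ Sᶜ, |b j|) ≤ μ * ∑ j ∈ S, |b j| →
      ν ^ 2 * (∑ j ∈ S, |b j|) ^ 2 ≤ (S.card : ℝ) * (b ⬝ᵥ A.mulVec b))
    (ρ : ℝ) (hρdef : ρ = ν⁻¹ ^ 2 * (1 + μ) ^ 2 * (S.card : ℝ) * lam * B)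
    (hρ : ρ < 1) :
    ∀ b : Fin p → ℝ, (∑ j ∈ Sᶜ, |b j|) ≤ μ * ∑ j ∈ S, |b j| →
      (ν * Real.sqrt (1 - ρ)) ^ 2 * (∑ j ∈ S, |b j|) ^ 2
        ≤ (S.card : ℝ) * (b ⬝ᵥ A'.mulVec b) := by
  intro b hb
  set a := ∑ j ∈ S, |b j| with ha_def
  have ha : 0 ≤ a := Finset.sum_nonneg fun j _ => abs_nonneg _
  have hl1 : ∑ j, |b j| ≤ (1 + μ) * a := by
    have := Finset.sum_add_sum_compl S (fun j => |b j|)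
    nlinarith [hb]
  have hl1nn : 0 ≤ ∑ j, |b j| := Finset.sum_nonneg fun j _ => abs_nonneg _
  have hc := hcompat b hb
  have hcl := hclose b
  have hdiff : b ⬝ᵥ (A' - A).mulVec b = b ⬝ᵥ A'.mulVec b - b ⬝ᵥ A.mulVec b := by
    rw [Matrix.sub_mulVec, dotProduct_sub]
  rw [hdiff] at hcl
  have habs := abs_le.mp hcl
  have hsq : (∑ j, |b j|) ^ 2 ≤ ((1 + μ) * a) ^ 2 := by
    apply pow_le_pow_left₀ hl1nn hl1
  have hcard : (0:ℝ) ≤ (S.card : ℝ) := Nat.cast_nonneg _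
  have hsqrt : Real.sqrt (1 - ρ) ^ 2 = 1 - ρ := Real.sq_sqrt (by linarith)
  have key : (S.card : ℝ) * (b ⬝ᵥ A'.mulVec b) ≥
      (S.card : ℝ) * (b ⬝ᵥ A.mulVec b) - (S.card : ℝ) * (B * lam * ((1 + μ) * a) ^ 2) := by
    have h1 : b ⬝ᵥ A'.mulVec b - b ⬝ᵥ A.mulVec b ≥ -(B * lam * ((1 + μ) * a) ^ 2) := by
      nlinarith [habs.1, mul_le_mul_of_nonneg_left hsq (by positivity : (0:ℝ) ≤ B * lam)]
    nlinarith [mul_le_mul_of_nonneg_left (neg_le_sub_iff_le_add.mp h1) hcard]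
  have hρa : ν ^ 2 * ρ = (1 + μ) ^ 2 * (S.card : ℝ) * lam * B := by
    rw [hρdef]; field_simp
  have : (ν * Real.sqrt (1 - ρ)) ^ 2 = ν ^ 2 - ν ^ 2 * ρ := by
    rw [mul_pow, hsqrt]; ring
  rw [this, hρa]
  nlinarith [hc, key]
end

section
/- Double robustness of the partially log-linear estimating function: let U = (Y,Z,X) with E[Y|Z,X] = exp(θ*Z + g*(X)), and define τ(U;θ,g,f) = (Y e^{−θZ} − e^{g(X)})(Z − f(X)). Then (a) E[τ(U;θ*,g*,f)] = 0 for every measurable f for which the expectation exists; and (b) if f*(X) = E[Z|X], then E[τ(U;θ*,g,f*)] = 0 for every measurable g for which the expectation exists. -/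
open MeasureTheory

lemma integrable_mul_of_memL2 {Ω : Type*} [MeasurableSpace Ω] {μ : Measure Ω}
    {f g : Ω → ℝ} (hf : MemLp f 2 μ) (hg : MemLp g 2 μ) :
    Integrable (fun ω => f ω * g ω) μ := by
  have h := L2.integrable_inner (𝕜 := ℝ) (hf.toLp f) (hg.toLp g)
  refine h.congr ?_
  filter_upwards [hf.coeFn_toLp, hg.coeFn_toLp] with ω h1 h2
  simp [h1, h2, RCLike.inner_apply]; ring

/-- If `h` is `m`-strongly measurable and `W` integrable, then
`∫ h * (W - E[W|m]) = 0` provided the product is integrable. -/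
lemma integral_mul_sub_condexp {Ω : Type*} {m0 : MeasurableSpace Ω}
    (μ : Measure Ω) [IsProbabilityMeasure μ] {m : MeasurableSpace Ω} (hm : m ≤ m0)
    {h W : Ω → ℝ} (hh : StronglyMeasurable[m] h) (hWint : Integrable W μ)
    (hint : Integrable (fun ω => h ω * (W ω - (μ[W|m]) ω)) μ) :
    ∫ ω, h ω * (W ω - (μ[W|m]) ω) ∂μ = 0 := by
  have hsig : SigmaFinite (μ.trim hm) := by
    have : IsFiniteMeasure (μ.trim hm) := isFiniteMeasure_trim hm
    infer_instance
  have hgint : Integrable (W - μ[W|m]) μ := hWint.sub integrable_condExp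
  have hcond : μ[W - μ[W|m]|m] =ᵐ[μ] 0 := by
    have h1 : μ[W - μ[W|m]|m] =ᵐ[μ] μ[W|m] - μ[μ[W|m]|m] :=
      condExp_sub hWint integrable_condExp m
    have h2 : μ[μ[W|m]|m] =ᵐ[μ] μ[W|m] := condExp_condExp_of_le le_rfl hm
    filter_upwards [h1, h2] with ω e1 e2
    simp only [Pi.sub_apply, Pi.zero_apply] at *
    rw [e1, e2]; ring
  have hfg : Integrable (h * (W - μ[W|m])) μ := hint
  have h1 : ∫ ω, (h * (W - μ[W|m])) ω ∂μ = ∫ ω, (μ[h * (W - μ[W|m])|m]) ω ∂μ :=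
    (integral_condExp hm).symm
  have h2 : μ[h * (W - μ[W|m])|m] =ᵐ[μ] h * μ[W - μ[W|m]|m] :=
    condExp_mul_of_stronglyMeasurable_left hh hfg hgint
  have h3 : (h * μ[W - μ[W|m]|m] : Ω → ℝ) =ᵐ[μ] 0 := by
    filter_upwards [hcond] with ω hω
    simp [hω]
  calc ∫ ω, h ω * (W ω - (μ[W|m]) ω) ∂μ
      = ∫ ω, (μ[h * (W - μ[W|m])|m]) ω ∂μ := h1
    _ = ∫ ω, (0 : Ω → ℝ) ω ∂μ := integral_congr_ae (h2.trans h3)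
    _ = 0 := by simp

set_option maxHeartbeats 1000000 in
/-- Double robustness of the partially log-linear estimating
function τ = (Y e^{−θZ} − e^{g(X)})(Z − f(X)): under
E[Y|Z,X] = exp(θ*Z + g*(X)),
(a) E[τ(θ*,g*,f)] = 0 for every measurable f for which the expectation exists, and
(b) if f*(X) = E[Z|X], then E[τ(θ*,g,f*)] = 0 for every measurable g for which
the expectation exists. -/
theorem stmt18 {Ω : Type*} [MeasurableSpace Ω] (μ : Measure Ω)
    [IsProbabilityMeasure μ]
    {d : ℕ} (X : Ω → Fin d → ℝ) (hX : Measurable X)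
    (Y Z : Ω → ℝ) (hY : Measurable Y) (hZ : Measurable Z)
    (θs : ℝ) (gs fs : (Fin d → ℝ) → ℝ)
    (hgs : Measurable gs) (hfs : Measurable fs)
    (hYint : Integrable Y μ)
    -- the partially log-linear model: E[Y | Z, X] = exp(θ*Z + g*(X))
    (hmodel : μ[Y | MeasurableSpace.comap (fun ω => (Z ω, X ω)) inferInstance]
      =ᵐ[μ] fun ω => Real.exp (θs * Z ω + gs (X ω)))
    -- square-integrability making the relevant expectations exist
    (hres : MemLp (fun ω => Y ω * Real.exp (-(θs * Z ω)) - Real.exp (gs (X ω))) 2 μ)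
    (hZfs : MemLp (fun ω => Z ω - fs (X ω)) 2 μ)
    -- f*(X) = E[Z | X]
    (hfstar : (fun ω => fs (X ω)) =ᵐ[μ]
      μ[Z | MeasurableSpace.comap X inferInstance]) :
    -- (a)
    (∀ f : (Fin d → ℝ) → ℝ, Measurable f →
      MemLp (fun ω => Z ω - f (X ω)) 2 μ →
      ∫ ω, (Y ω * Real.exp (-(θs * Z ω)) - Real.exp (gs (X ω)))
        * (Z ω - f (X ω)) ∂μ = 0) ∧
    -- (b)
    (∀ g : (Fin d → ℝ) → ℝ, Measurable g →
      MemLp (fun ω => Y ω * Real.exp (-(θs * Z ω)) - Real.exp (g (X ω))) 2 μ →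
      ∫ ω, (Y ω * Real.exp (-(θs * Z ω)) - Real.exp (g (X ω)))
        * (Z ω - fs (X ω)) ∂μ = 0) := by
  have hm : MeasurableSpace.comap (fun ω => (Z ω, X ω)) inferInstance
      ≤ ‹MeasurableSpace Ω› := (hZ.prodMk hX).comap_le
  have hmX : MeasurableSpace.comap X inferInstance ≤ ‹MeasurableSpace Ω› :=
    hX.comap_le
  have hZXmeas : Measurable[MeasurableSpace.comap (fun ω => (Z ω, X ω)) inferInstance]
      (fun ω => (Z ω, X ω)) := fun s hs => ⟨s, hs, rfl⟩
  have hXmeas : Measurable[MeasurableSpace.comap X inferInstance] X :=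
    fun s hs => ⟨s, hs, rfl⟩
  -- part (a), for any f
  have parta : ∀ f : (Fin d → ℝ) → ℝ, Measurable f →
      MemLp (fun ω => Z ω - f (X ω)) 2 μ →
      ∫ ω, (Y ω * Real.exp (-(θs * Z ω)) - Real.exp (gs (X ω)))
        * (Z ω - f (X ω)) ∂μ = 0 := by
    intro f hf hZf
    have hh_meas : StronglyMeasurable[MeasurableSpace.comap
        (fun ω => (Z ω, X ω)) inferInstance]
        (fun ω => Real.exp (-(θs * Z ω)) * (Z ω - f (X ω))) := by
      have hφ : Measurable (fun p : ℝ × (Fin d → ℝ) =>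
          Real.exp (-(θs * p.1)) * (p.1 - f p.2)) := by fun_prop
      exact (hφ.comp hZXmeas).stronglyMeasurable
    -- the product equals the estimating function a.e.
    have hprod_ae : (fun ω => Real.exp (-(θs * Z ω)) * (Z ω - f (X ω))
          * (Y ω - (μ[Y|MeasurableSpace.comap (fun ω => (Z ω, X ω)) inferInstance]) ω))
        =ᵐ[μ] fun ω => (Y ω * Real.exp (-(θs * Z ω)) - Real.exp (gs (X ω)))
          * (Z ω - f (X ω)) := by
      filter_upwards [hmodel] with ω hω
      rw [hω]
      have : Real.exp (-(θs * Z ω)) * Real.exp (θs * Z ω + gs (X ω))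
          = Real.exp (gs (X ω)) := by
        rw [← Real.exp_add]; ring_nf
      linear_combination -(Z ω - f (X ω)) * this
    have hprod_int : Integrable (fun ω => Real.exp (-(θs * Z ω)) * (Z ω - f (X ω))
        * (Y ω - (μ[Y|MeasurableSpace.comap (fun ω => (Z ω, X ω)) inferInstance]) ω)) μ :=
      (integrable_mul_of_memL2 hres hZf).congr hprod_ae.symm
    have key := integral_mul_sub_condexp μ hm hh_meas hYint hprod_int
    calc ∫ ω, (Y ω * Real.exp (-(θs * Z ω)) - Real.exp (gs (X ω)))
          * (Z ω - f (X ω)) ∂μ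
        = ∫ ω, Real.exp (-(θs * Z ω)) * (Z ω - f (X ω))
            * (Y ω - (μ[Y|MeasurableSpace.comap (fun ω => (Z ω, X ω)) inferInstance]) ω) ∂μ :=
          integral_congr_ae hprod_ae.symm
      _ = 0 := key
  refine ⟨parta, ?_⟩
  -- part (b)
  intro g hg hresg
  have hZfs_int : Integrable (fun ω => Z ω - fs (X ω)) μ :=
    hZfs.integrable (by norm_num)
  have hfsX_int : Integrable (fun ω => fs (X ω)) μ :=
    integrable_condExp.congr hfstar.symm
  have hZint : Integrable Z μ := by
    have := hZfs_int.add hfsX_int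
    refine this.congr ?_
    filter_upwards with ω
    simp only [Pi.add_apply]; ring
  have hk : MemLp (fun ω => Real.exp (gs (X ω)) - Real.exp (g (X ω))) 2 μ := by
    refine MemLp.ae_eq ?_ (hresg.sub hres)
    filter_upwards with ω
    simp only [Pi.sub_apply]; ring
  have hk_meas : StronglyMeasurable[MeasurableSpace.comap X inferInstance]
      (fun ω => Real.exp (gs (X ω)) - Real.exp (g (X ω))) := by
    have hφ : Measurable (fun x : Fin d → ℝ => Real.exp (gs x) - Real.exp (g x)) := by
      fun_prop
    exact (hφ.comp hXmeas).stronglyMeasurable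
  have hq_ae : (fun ω => (Real.exp (gs (X ω)) - Real.exp (g (X ω)))
        * (Z ω - (μ[Z|MeasurableSpace.comap X inferInstance]) ω))
      =ᵐ[μ] fun ω => (Real.exp (gs (X ω)) - Real.exp (g (X ω))) * (Z ω - fs (X ω)) := by
    filter_upwards [hfstar] with ω hω
    rw [← hω]
  have hq_prodint : Integrable (fun ω => (Real.exp (gs (X ω)) - Real.exp (g (X ω)))
      * (Z ω - (μ[Z|MeasurableSpace.comap X inferInstance]) ω)) μ :=
    (integrable_mul_of_memL2 hk hZfs).congr hq_ae.symm
  have hsecond0 : ∫ ω, (Real.exp (gs (X ω)) - Real.exp (g (X ω)))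
      * (Z ω - fs (X ω)) ∂μ = 0 := by
    have key := integral_mul_sub_condexp μ hmX hk_meas hZint hq_prodint
    calc ∫ ω, (Real.exp (gs (X ω)) - Real.exp (g (X ω))) * (Z ω - fs (X ω)) ∂μ
        = ∫ ω, (Real.exp (gs (X ω)) - Real.exp (g (X ω)))
            * (Z ω - (μ[Z|MeasurableSpace.comap X inferInstance]) ω) ∂μ :=
          integral_congr_ae hq_ae.symm
      _ = 0 := key
  have hfirst0 := parta fs hfs hZfs
  have hint1 : Integrable (fun ω => (Y ω * Real.exp (-(θs * Z ω)) - Real.exp (gs (X ω)))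
      * (Z ω - fs (X ω))) μ := integrable_mul_of_memL2 hres hZfs
  have hint2 : Integrable (fun ω => (Real.exp (gs (X ω)) - Real.exp (g (X ω)))
      * (Z ω - fs (X ω))) μ := integrable_mul_of_memL2 hk hZfs
  have hsplit : ∫ ω, (Y ω * Real.exp (-(θs * Z ω)) - Real.exp (g (X ω)))
      * (Z ω - fs (X ω)) ∂μ
      = (∫ ω, (Y ω * Real.exp (-(θs * Z ω)) - Real.exp (gs (X ω)))
          * (Z ω - fs (X ω)) ∂μ)
        + ∫ ω, (Real.exp (gs (X ω)) - Real.exp (g (X ω))) * (Z ω - fs (X ω)) ∂μ := by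
    rw [← integral_add hint1 hint2]
    apply integral_congr_ae
    filter_upwards with ω
    ring
  rw [hsplit, hfirst0, hsecond0]
  norm_num
end
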